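/- Let γ : ℝ → ℝ² be C² with |γ'(s)| = 1 for all s, set ν(s) = (γ₂'(s), −γ₁'(s), 0) ∈ ℝ³, and let κ : ℝ → ℝ satisfy (γ₂''(s), −γ₁''(s)) = κ(s)·γ'(s) for all s. Let a, b : ℝ³ → ℂ³ be C¹ on an open neighborhood of the cylindrical surface S = {(γ₁(s), γ₂(s), t) : s, t ∈ ℝ}, and suppose that for all s, t the tangential components vanish: a(γ(s), t) = (Σₖ aₖ(γ(s), t)·νₖ(s))·ν(s) and b(γ(s), t) = (Σₖ bₖ(γ(s), t)·νₖ(s))·ν(s). Then at every point x = (γ(s), t), one has Σₖ νₖ(s)·aₖ(x)·conj((div b)(x)) − Σⱼₖ νⱼ(s)·aₖ(x)·conj((∂ₖbⱼ)(x)) = κ(s)·⟨a(x), b(x)⟩. -/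

import Mathlib

noncomputable section

open MeasureTheory Real Complex

/-- Points of `ℝ³`. -/
abbrev V3 := Fin 3 → ℝ
/-- Vectors of `ℂ³`. -/
abbrev C3 := Fin 3 → ℂ

/-- Partial derivative `∂ⱼ` of a complex scalar function on `ℝ³`. -/
def pd (j : Fin 3) (f : V3 → ℂ) (x : V3) : ℂ := fderiv ℝ f x (Pi.single j 1)

/-- Partial derivative `∂ⱼ` of a real scalar function on `ℝ³`. -/
def pdR (j : Fin 3) (f : V3 → ℝ) (x : V3) : ℝ := fderiv ℝ f x (Pi.single j 1)

/-- Partial derivative `∂ⱼ` of a vector field, taken componentwise. -/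
def pdV (j : Fin 3) (a : V3 → C3) (x : V3) : C3 := fun i => pd j (fun y => a y i) x

/-- curl a = (∂₂a₃ − ∂₃a₂, ∂₃a₁ − ∂₁a₃, ∂₁a₂ − ∂₂a₁)  (indices 0,1,2). -/
def vcurl (a : V3 → C3) (x : V3) : C3 :=
  ![pd 1 (fun y => a y 2) x - pd 2 (fun y => a y 1) x,
    pd 2 (fun y => a y 0) x - pd 0 (fun y => a y 2) x,
    pd 0 (fun y => a y 1) x - pd 1 (fun y => a y 0) x]

/-- div a = ∂₁a₁ + ∂₂a₂ + ∂₃a₃. -/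
def vdiv (a : V3 → C3) (x : V3) : ℂ := ∑ j, pd j (fun y => a y j) x

/-- The bilinear (unconjugated) cross product on ℂ³. -/
def cross (a b : C3) : C3 :=
  ![a 1 * b 2 - a 2 * b 1, a 2 * b 0 - a 0 * b 2, a 0 * b 1 - a 1 * b 0]

/-- The Hermitian inner product ⟨a, b⟩ = Σⱼ aⱼ · conj(bⱼ). -/
def hinner (a b : C3) : ℂ := ∑ j, a j * (starRingEnd ℂ) (b j)

/-- The gradient of a real function, viewed as a complex vector. -/
def gradC (g : V3 → ℝ) (x : V3) : C3 := fun j => (pdR j g x : ℂ)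

/-- The Laplacian Δg = ∂₁²g + ∂₂²g + ∂₃²g of a real function. -/
def lapR (g : V3 → ℝ) (x : V3) : ℝ := ∑ j, pdR j (fun y => pdR j g y) x

/-- The solid infinite circular cylinder Π of radius `R`. -/
def Cyl (R : ℝ) : Set V3 := {x | x 0 ^ 2 + x 1 ^ 2 < R ^ 2}

/-- The boundary ∂Π of the cylinder. -/
def bCyl (R : ℝ) : Set V3 := {x | x 0 ^ 2 + x 1 ^ 2 = R ^ 2}

/-- The outward unit normal of the cylinder at a boundary point. -/
def nuR (R : ℝ) (x : V3) : V3 := ![x 0 / R, x 1 / R, 0]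

/-- The outward unit normal, viewed as a complex vector. -/
def nuC (R : ℝ) (x : V3) : C3 := fun j => (nuR R x j : ℂ)

/-- The normal component ⟨z, ν⟩ of z ∈ ℂ³ at a boundary point of the cylinder. -/
def ncomp (R : ℝ) (x : V3) (z : C3) : ℂ := ∑ k, z k * (nuR R x k : ℂ)

/-- The normal derivative ∂_ν g = ⟨∇g, ν⟩ of a real function at a boundary point. -/
def dnu (R : ℝ) (g : V3 → ℝ) (x : V3) : ℝ := ∑ k, pdR k g x * nuR R x k

/-- The surface integral ∫_{∂Π} F dS = ∫_ℝ ∫₀^{2π} F(R cos θ, R sin θ, t)·R dθ dt. -/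
def surfInt (R : ℝ) (F : V3 → ℂ) : ℂ :=
  ∫ t : ℝ, ∫ θ in (0:ℝ)..(2 * π), F ![R * Real.cos θ, R * Real.sin θ, t] * (R : ℂ)

/-- `f` is `C^k` up to the boundary of the open set `S`: it is `k` times continuously
differentiable on an open neighborhood of the closure of `S`. -/
def UpTo {E : Type*} [NormedAddCommGroup E] [NormedSpace ℝ E]
    (k : ℕ) (S : Set V3) (f : V3 → E) : Prop :=
  ∃ U : Set V3, IsOpen U ∧ closure S ⊆ U ∧ ContDiffOn ℝ k f U

/-- `f` has compact axial support: it vanishes whenever `|x₃| ≥ T` for some `T > 0`. -/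
def AxialSupp {E : Type*} [Zero E] (f : V3 → E) : Prop :=
  ∃ T > 0, ∀ x : V3, T ≤ |x 2| → f x = 0

/-- The matrix W₀(μ)ⱼₖ = μ⁻¹(Δμ)δⱼₖ + μ⁻²(∂ⱼμ)(∂ₖμ) − μ⁻¹∂ⱼ∂ₖμ. -/
def W0 (μ : V3 → ℝ) (x : V3) (j k : Fin 3) : ℝ :=
  (μ x)⁻¹ * lapR μ x * (if j = k then 1 else 0)
    + ((μ x) ^ 2)⁻¹ * pdR j μ x * pdR k μ x
    - (μ x)⁻¹ * pdR j (fun y => pdR k μ y) x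

/-- The matrix W(μ)ⱼₖ = ((2μ)⁻¹Δμ − (4μ²)⁻¹|∇μ|²)δⱼₖ + μ⁻²(∂ⱼμ)(∂ₖμ) − μ⁻¹∂ⱼ∂ₖμ. -/
def Wm (μ : V3 → ℝ) (x : V3) (j k : Fin 3) : ℝ :=
  ((2 * μ x)⁻¹ * lapR μ x - (4 * (μ x) ^ 2)⁻¹ * (∑ i, (pdR i μ x) ^ 2))
      * (if j = k then 1 else 0)
    + ((μ x) ^ 2)⁻¹ * pdR j μ x * pdR k μ x
    - (μ x)⁻¹ * pdR j (fun y => pdR k μ y) x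


/-- The point (γ₁(s), γ₂(s), t) on the cylindrical surface over the curve γ. -/
def ptC (γ : ℝ → Fin 2 → ℝ) (s t : ℝ) : V3 := ![γ s 0, γ s 1, t]

/-- The normal ν(s) = (γ₂'(s), −γ₁'(s), 0) to the curve γ, viewed in ℝ³. -/
def nuγ (γ : ℝ → Fin 2 → ℝ) (s : ℝ) : V3 :=
  ![deriv γ s 1, -deriv γ s 0, 0]

/-!
On the surface `a = A ν` and `b = B ν`. As `|ν| = 1`, the left side is `A · conj (div b - ⟨∂_ν b, ν⟩)`,
and reading the trace `div b` in the orthonormal frame `(T, ν, e₃)`, `T = (γ₁', γ₂', 0)`, leaves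
`⟨∂_T b, T⟩ + ∂₃ b₃`. On vertical lines `b₃ ≡ 0`, so `∂₃ b₃ = 0`. Along the curve `⟨b, T⟩ ≡ 0`;
differentiating and using `T' = -κ ν` gives `⟨∂_T b, T⟩ = κ B`. So the left side is
`κ A conj B = κ ⟨a, b⟩`.
-/

def tanγ (γ : ℝ → Fin 2 → ℝ) (s : ℝ) : V3 := ![deriv γ s 0, deriv γ s 1, 0]

theorem hasDerivAt_comp_eq_sum_pd {f : V3 → ℂ} {c : ℝ → V3} {v : V3} {u : ℝ}
    (hf : DifferentiableAt ℝ f (c u)) (hc : HasDerivAt c v u) :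
    HasDerivAt (fun r => f (c r)) (∑ k, (v k : ℂ) * pd k f (c u)) u := by
  have hv : fderiv ℝ f (c u) v = ∑ k, (v k : ℂ) * pd k f (c u) := by
    conv_lhs => rw [pi_eq_sum_univ' v]
    simp [pd, Complex.real_smul]
  exact (hf.hasFDerivAt.comp_hasDerivAt u hc).congr_deriv hv

theorem hasDerivAt_ptC_left {γ : ℝ → Fin 2 → ℝ} {s : ℝ} (t : ℝ)
    (hγ : DifferentiableAt ℝ γ s) : HasDerivAt (fun u => ptC γ u t) (tanγ γ s) s := by
  have h := hasDerivAt_pi.mp hγ.hasDerivAt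
  rw [hasDerivAt_pi]
  intro i
  fin_cases i
  · simpa [ptC, tanγ] using h 0
  · simpa [ptC, tanγ] using h 1
  · simpa [ptC, tanγ] using hasDerivAt_const s t

theorem hasDerivAt_ptC_right (γ : ℝ → Fin 2 → ℝ) (s t : ℝ) :
    HasDerivAt (ptC γ s) (Pi.single 2 1) t := by
  rw [hasDerivAt_pi]
  intro i
  fin_cases i
  · simpa [ptC] using hasDerivAt_const t (γ s 0)
  · simpa [ptC] using hasDerivAt_const t (γ s 1)
  · simpa [ptC] using hasDerivAt_id' t

/-- The Frenet equation `T' = -κ ν`, read off from `ν' = κ T`. -/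
theorem hasDerivAt_tanγ {γ : ℝ → Fin 2 → ℝ} {κ : ℝ → ℝ} {s : ℝ}
    (hγ' : DifferentiableAt ℝ (deriv γ) s)
    (hκ : deriv (fun u => deriv γ u 1) s = κ s * deriv γ s 0
      ∧ -deriv (fun u => deriv γ u 0) s = κ s * deriv γ s 1) (j : Fin 3) :
    HasDerivAt (fun u => tanγ γ u j) (-κ s * nuγ γ s j) s := by
  have h := fun i => (differentiableAt_pi.mp hγ' i).hasDerivAt
  fin_cases j
  · refine (h 0).congr_deriv ?_
    simp only [nuγ, Fin.zero_eta, Matrix.cons_val_zero]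
    linarith [hκ.2]
  · refine (h 1).congr_deriv ?_
    simp [nuγ, hκ.1]
  · simpa [tanγ, nuγ] using hasDerivAt_const s (0 : ℝ)

theorem sum_mul_tanγ_eq_zero {γ : ℝ → Fin 2 → ℝ} {s : ℝ} {z : C3} {c : ℂ}
    (hz : ∀ i, z i = c * nuγ γ s i) : ∑ j, z j * tanγ γ s j = 0 := by
  simp only [Fin.sum_univ_three, hz, nuγ, tanγ]
  push_cast
  ring

/-- Differentiate `⟨b, T⟩ ≡ 0` along the curve and use `T' = -κ ν`. -/
theorem tangential_pd_of_normal_field {γ : ℝ → Fin 2 → ℝ} {κ : ℝ → ℝ} {b : V3 → C3} {s t : ℝ}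
    (hγ : DifferentiableAt ℝ γ s) (hγ' : DifferentiableAt ℝ (deriv γ) s)
    (hκ : deriv (fun u => deriv γ u 1) s = κ s * deriv γ s 0
      ∧ -deriv (fun u => deriv γ u 0) s = κ s * deriv γ s 1)
    (hb : DifferentiableAt ℝ b (ptC γ s t))
    (hbt : ∀ u i, b (ptC γ u t) i = (∑ k, b (ptC γ u t) k * (nuγ γ u k : ℂ)) * (nuγ γ u i : ℂ)) :
    ∑ j, ∑ k, (tanγ γ s j : ℂ) * tanγ γ s k * pd k (fun y => b y j) (ptC γ s t)
      = κ s * ∑ k, b (ptC γ s t) k * nuγ γ s k := by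
  have hsum := HasDerivAt.fun_sum (u := Finset.univ) fun j _ =>
    (hasDerivAt_comp_eq_sum_pd (c := fun u => ptC γ u t) (differentiableAt_pi.mp hb j)
      (hasDerivAt_ptC_left t hγ)).fun_mul (hasDerivAt_tanγ hγ' hκ j).ofReal_comp
  have hzero : (fun u => ∑ j, b (ptC γ u t) j * (tanγ γ u j : ℂ)) = fun _ => 0 :=
    funext fun u => sum_mul_tanγ_eq_zero (hbt u)
  rw [hzero] at hsum
  have h := hsum.unique (hasDerivAt_const s 0)
  simp only [Fin.sum_univ_three] at h ⊢
  push_cast at h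
  linear_combination h

theorem pd_two_eq_zero_of_ptC {γ : ℝ → Fin 2 → ℝ} {f : V3 → ℂ} {s t : ℝ}
    (hf : DifferentiableAt ℝ f (ptC γ s t)) (hzero : ∀ u, f (ptC γ s u) = 0) :
    pd 2 f (ptC γ s t) = 0 := by
  have h := hf.hasFDerivAt.comp_hasDerivAt t (hasDerivAt_ptC_right γ s t)
  rw [show f ∘ ptC γ s = fun _ => 0 from funext hzero] at h
  exact h.unique (hasDerivAt_const t 0)

theorem sum_diag_eq_frame_sum {γ : ℝ → Fin 2 → ℝ} {s : ℝ}
    (hunit : deriv γ s 0 ^ 2 + deriv γ s 1 ^ 2 = 1) (M : Fin 3 → Fin 3 → ℂ) :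
    ∑ j, M j j = ∑ j, ∑ k, (nuγ γ s j : ℂ) * nuγ γ s k * M j k
      + ∑ j, ∑ k, (tanγ γ s j : ℂ) * tanγ γ s k * M j k + M 2 2 := by
  have hu : (deriv γ s 0 : ℂ) ^ 2 + (deriv γ s 1 : ℂ) ^ 2 = 1 := by exact_mod_cast hunit
  simp only [Fin.sum_univ_three, nuγ, tanγ]
  push_cast
  linear_combination (-(M 0 0) - M 1 1) * hu

theorem sum_nuγ_mul_self {γ : ℝ → Fin 2 → ℝ} {s : ℝ}
    (hunit : deriv γ s 0 ^ 2 + deriv γ s 1 ^ 2 = 1) :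
    ∑ k, (nuγ γ s k : ℂ) * nuγ γ s k = 1 := by
  have hu : (deriv γ s 0 : ℂ) ^ 2 + (deriv γ s 1 : ℂ) ^ 2 = 1 := by exact_mod_cast hunit
  simp only [Fin.sum_univ_three, nuγ]
  push_cast
  linear_combination hu

theorem hinner_smul_nuγ {γ : ℝ → Fin 2 → ℝ} {s : ℝ}
    (hunit : deriv γ s 0 ^ 2 + deriv γ s 1 ^ 2 = 1) (A B : ℂ) :
    hinner (fun i => A * nuγ γ s i) (fun i => B * nuγ γ s i) = A * starRingEnd ℂ B := by
  calc _ = A * starRingEnd ℂ B * ∑ k, (nuγ γ s k : ℂ) * nuγ γ s k := by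
        simp only [hinner, map_mul, Complex.conj_ofReal, Finset.mul_sum]
        exact Finset.sum_congr rfl fun k _ => by ring
    _ = A * starRingEnd ℂ B := by rw [sum_nuγ_mul_self hunit, mul_one]

theorem boundary_identity_of_normal_fields {γ : ℝ → Fin 2 → ℝ} {s κ : ℝ} {x y : C3}
    {M : Fin 3 → Fin 3 → ℂ} (hunit : deriv γ s 0 ^ 2 + deriv γ s 1 ^ 2 = 1)
    (hx : ∀ i, x i = (∑ k, x k * (nuγ γ s k : ℂ)) * nuγ γ s i)
    (hy : ∀ i, y i = (∑ k, y k * (nuγ γ s k : ℂ)) * nuγ γ s i)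
    (htan : ∑ j, ∑ k, (tanγ γ s j : ℂ) * tanγ γ s k * M j k = κ * ∑ k, y k * nuγ γ s k)
    (h22 : M 2 2 = 0) :
    ∑ k, (nuγ γ s k : ℂ) * x k * starRingEnd ℂ (∑ j, M j j)
      - ∑ j, ∑ k, (nuγ γ s j : ℂ) * x k * starRingEnd ℂ (M j k) = κ * hinner x y := by
  generalize ∑ k, x k * (nuγ γ s k : ℂ) = A at hx
  generalize ∑ k, y k * (nuγ γ s k : ℂ) = B at hy htan
  obtain rfl : x = fun i => A * nuγ γ s i := funext hx
  obtain rfl : y = fun i => B * nuγ γ s i := funext hy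
  have hnormal : ∑ k, (nuγ γ s k : ℂ) * (A * nuγ γ s k) = A := by
    calc _ = A * ∑ k, (nuγ γ s k : ℂ) * nuγ γ s k := by
          rw [Finset.mul_sum]
          exact Finset.sum_congr rfl fun k _ => by ring
      _ = A := by rw [sum_nuγ_mul_self hunit, mul_one]
  have hNN : ∑ j, ∑ k, (nuγ γ s j : ℂ) * (A * nuγ γ s k) * starRingEnd ℂ (M j k)
      = A * starRingEnd ℂ (∑ j, ∑ k, (nuγ γ s j : ℂ) * nuγ γ s k * M j k) := by
    simp only [map_sum, map_mul, Complex.conj_ofReal, Finset.mul_sum]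
    exact Finset.sum_congr rfl fun j _ => Finset.sum_congr rfl fun k _ => by ring
  rw [← Finset.sum_mul, hnormal, hNN, hinner_smul_nuγ hunit, sum_diag_eq_frame_sum hunit M, htan, h22]
  simp only [map_add, map_mul, Complex.conj_ofReal, map_zero]
  ring

theorem statement4_general (γ : ℝ → Fin 2 → ℝ) (κ : ℝ → ℝ)
    (hγ : ContDiff ℝ 2 γ)
    (hunit : ∀ s, (deriv γ s 0) ^ 2 + (deriv γ s 1) ^ 2 = 1)
    (hκ : ∀ s, deriv (fun u => deriv γ u 1) s = κ s * deriv γ s 0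
             ∧ -deriv (fun u => deriv γ u 0) s = κ s * deriv γ s 1)
    (a b : V3 → C3) (U : Set V3) (hU : IsOpen U)
    (hSU : ∀ s t : ℝ, ptC γ s t ∈ U)
    (hb : ContDiffOn ℝ 1 b U)
    (hat : ∀ s t : ℝ, ∀ i,
      a (ptC γ s t) i = (∑ k, a (ptC γ s t) k * (nuγ γ s k : ℂ)) * (nuγ γ s i : ℂ))
    (hbt : ∀ s t : ℝ, ∀ i,
      b (ptC γ s t) i = (∑ k, b (ptC γ s t) k * (nuγ γ s k : ℂ)) * (nuγ γ s i : ℂ))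
    (s t : ℝ) :
    ∑ k, (nuγ γ s k : ℂ) * a (ptC γ s t) k * (starRingEnd ℂ) (vdiv b (ptC γ s t))
      - ∑ j, ∑ k, (nuγ γ s j : ℂ) * a (ptC γ s t) k
          * (starRingEnd ℂ) (pd k (fun y => b y j) (ptC γ s t))
    = (κ s : ℂ) * hinner (a (ptC γ s t)) (b (ptC γ s t)) := by
  have hb' : DifferentiableAt ℝ b (ptC γ s t) :=
    (hb.differentiableOn one_ne_zero).differentiableAt (hU.mem_nhds (hSU s t))
  have hγ' : Differentiable ℝ (deriv γ) := hγ.differentiable_deriv_two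
  refine boundary_identity_of_normal_fields (M := fun j k => pd k (fun y => b y j) (ptC γ s t))
    (hunit s) (hat s t) (hbt s t) ?_ ?_
  · exact tangential_pd_of_normal_field (hγ.differentiable two_ne_zero s) (hγ' s) (hκ s) hb'
      fun u => hbt u t
  · refine pd_two_eq_zero_of_ptC (differentiableAt_pi.mp hb' 2) fun u => ?_
    simp [hbt s u 2, nuγ]

/-- boundary identity I(x) = κ(s)·⟨a, b⟩ for fields with vanishing tangential
components on the cylindrical surface over a unit-speed curve γ. -/
theorem statement4 (γ : ℝ → Fin 2 → ℝ) (κ : ℝ → ℝ)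
    (hγ : ContDiff ℝ 2 γ)
    (hunit : ∀ s, (deriv γ s 0) ^ 2 + (deriv γ s 1) ^ 2 = 1)
    (hκ : ∀ s, deriv (fun u => deriv γ u 1) s = κ s * deriv γ s 0
             ∧ -deriv (fun u => deriv γ u 0) s = κ s * deriv γ s 1)
    (a b : V3 → C3) (U : Set V3) (hU : IsOpen U)
    (hSU : ∀ s t : ℝ, ptC γ s t ∈ U)
    (ha : ContDiffOn ℝ 1 a U) (hb : ContDiffOn ℝ 1 b U)
    (hat : ∀ s t : ℝ, ∀ i,
      a (ptC γ s t) i = (∑ k, a (ptC γ s t) k * (nuγ γ s k : ℂ)) * (nuγ γ s i : ℂ))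
    (hbt : ∀ s t : ℝ, ∀ i,
      b (ptC γ s t) i = (∑ k, b (ptC γ s t) k * (nuγ γ s k : ℂ)) * (nuγ γ s i : ℂ))
    (s t : ℝ) :
    ∑ k, (nuγ γ s k : ℂ) * a (ptC γ s t) k * (starRingEnd ℂ) (vdiv b (ptC γ s t))
      - ∑ j, ∑ k, (nuγ γ s j : ℂ) * a (ptC γ s t) k
          * (starRingEnd ℂ) (pd k (fun y => b y j) (ptC γ s t))
    = (κ s : ℂ) * hinner (a (ptC γ s t)) (b (ptC γ s t)) :=
  statement4_general γ κ hγ hunit hκ a b U hU hSU hb hat hbt s t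

end
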